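/- Define φ(α) := α³ ⟨(A A^* + αI)^{-3} b, b⟩ for α > 0, where A ∈ ℝ^{n×n} and b ∈ ℝ^n. Then φ is nondecreasing in α, lim_{α→∞} φ(α) = ‖b‖₂², and lim_{α→0+} φ(α) = ‖(I − P_{R(A)}) b‖₂², where P_{R(A)} is the orthogonal projector onto Range(A). Consequently, if ‖(I − P_{R(A)}) b‖₂ < τ < ‖b‖₂, the equation φ(α) = τ² has a solution α > 0. -/

import Mathlib

open Matrix
open scoped RealInnerProductSpace

section Aux

variable {n : ℕ}

lemma inv_mulVec_eig {B : Matrix (Fin n) (Fin n) ℝ} (hB : IsUnit B)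
    {v : Fin n → ℝ} {c : ℝ} (hc : c ≠ 0) (h : B *ᵥ v = c • v) :
    B⁻¹ *ᵥ v = c⁻¹ • v := by
  have h1 : B⁻¹ *ᵥ (B *ᵥ v) = v := by
    rw [mulVec_mulVec, Matrix.nonsing_inv_mul _ ((Matrix.isUnit_iff_isUnit_det _).1 hB),
      one_mulVec]
  rw [h, mulVec_smul] at h1
  rw [eq_comm, inv_smul_eq_iff₀ hc]
  exact h1.symm

lemma cube_inv_mulVec_eig {B : Matrix (Fin n) (Fin n) ℝ} (hB : IsUnit B)
    {v : Fin n → ℝ} {c : ℝ} (hc : c ≠ 0) (h : B *ᵥ v = c • v) :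
    (B⁻¹ ^ 3) *ᵥ v = (c⁻¹) ^ 3 • v := by
  have h1 := inv_mulVec_eig hB hc h
  have h3 : B⁻¹ ^ 3 = B⁻¹ * B⁻¹ * B⁻¹ := by rw [pow_succ, pow_two]
  rw [h3, ← mulVec_mulVec, ← mulVec_mulVec]
  simp only [h1, mulVec_smul, smul_smul]
  ring_nf

lemma shifted_posdef {M : Matrix (Fin n) (Fin n) ℝ} (hps : M.PosSemidef) {α : ℝ} (hα : 0 < α) :
    (M + α • 1).PosDef := by
  refine Matrix.PosDef.posSemidef_add hps ?_
  rw [smul_one_eq_diagonal]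
  exact (posDef_diagonal_iff).2 fun _ => hα

lemma phi_expand {A : Matrix (Fin n) (Fin n) ℝ} (hps : (A * Aᵀ).PosSemidef)
    (b : EuclideanSpace ℝ (Fin n)) {α : ℝ} (hα : 0 < α) :
    α ^ 3 * inner (𝕜 := ℝ) (Matrix.toEuclideanLin ((A * Aᵀ + α • 1)⁻¹ ^ 3) b) b
      = ∑ i, (α / (hps.1.eigenvalues i + α)) ^ 3 *
          (inner (𝕜 := ℝ) (hps.1.eigenvectorBasis i) b) ^ 2 := by
  set μ := hps.1.eigenvalues with hμdef
  set V := hps.1.eigenvectorBasis with hVdef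
  have hμ : ∀ i, 0 ≤ μ i := hps.eigenvalues_nonneg
  have hpos : ∀ i, 0 < μ i + α := fun i => add_pos_of_nonneg_of_pos (hμ i) hα
  have hB : IsUnit (A * Aᵀ + α • 1) := (shifted_posdef hps hα).isUnit
  have heig : ∀ i, (A * Aᵀ + α • 1) *ᵥ ⇑(V i) = (μ i + α) • ⇑(V i) := by
    intro i
    rw [add_mulVec, smul_mulVec, one_mulVec, hps.1.mulVec_eigenvectorBasis, ← add_smul]
  have hN : ∀ i, Matrix.toEuclideanLin ((A * Aᵀ + α • 1)⁻¹ ^ 3) (V i)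
      = ((μ i + α)⁻¹) ^ 3 • V i := by
    intro i
    have := cube_inv_mulVec_eig hB (hpos i).ne' (heig i)
    ext j
    have := congrFun this j
    simpa [Matrix.toEuclideanLin_apply] using this
  have hb : ∑ i, (inner (𝕜 := ℝ) (V i) b) • V i = b := V.sum_repr' b
  calc α ^ 3 * inner (𝕜 := ℝ) (Matrix.toEuclideanLin ((A * Aᵀ + α • 1)⁻¹ ^ 3) b) b
      = α ^ 3 * inner (𝕜 := ℝ) (Matrix.toEuclideanLin ((A * Aᵀ + α • 1)⁻¹ ^ 3)
          (∑ i, (inner (𝕜 := ℝ) (V i) b) • V i)) b := by rw [hb]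
    _ = α ^ 3 * ∑ i, (inner (𝕜 := ℝ) (V i) b * ((μ i + α)⁻¹) ^ 3) * inner (𝕜 := ℝ) (V i) b := by
        rw [map_sum, sum_inner]
        congr 1
        refine Finset.sum_congr rfl fun i _ => ?_
        rw [_root_.map_smul, hN i, smul_smul, real_inner_smul_left]
    _ = ∑ i, (α / (μ i + α)) ^ 3 * (inner (𝕜 := ℝ) (V i) b) ^ 2 := by
        rw [Finset.mul_sum]
        refine Finset.sum_congr rfl fun i _ => ?_
        rw [div_pow]
        field_simp

lemma tail_norm {A : Matrix (Fin n) (Fin n) ℝ} (hps : (A * Aᵀ).PosSemidef)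
    (b : EuclideanSpace ℝ (Fin n)) :
    ‖b - (LinearMap.range (Matrix.toEuclideanLin A)).subtype
        ((LinearMap.range (Matrix.toEuclideanLin A)).orthogonalProjectionOnto b)‖ ^ 2
      = ∑ i, if hps.1.eigenvalues i = 0 then
          (inner (𝕜 := ℝ) (hps.1.eigenvectorBasis i) b) ^ 2 else 0 := by
  set μ := hps.1.eigenvalues with hμdef
  set V := hps.1.eigenvectorBasis with hVdef
  set K : Submodule ℝ (EuclideanSpace ℝ (Fin n)) :=
    LinearMap.range (Matrix.toEuclideanLin A) with hKdef
  set Pb : EuclideanSpace ℝ (Fin n) := b - K.subtype (K.orthogonalProjectionOnto b) with hPbdef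
  have hPb : Pb ∈ Kᗮ := K.sub_starProjection_mem_orthogonal b
  have hcomp : ∀ x : EuclideanSpace ℝ (Fin n),
      Matrix.toEuclideanLin (A * Aᵀ) x ∈ K := by
    intro x
    rw [hKdef]
    have : Matrix.toEuclideanLin (A * Aᵀ) x
        = Matrix.toEuclideanLin A ((WithLp.equiv 2 _).symm (Aᵀ *ᵥ (WithLp.equiv 2 _) x)) := by
      rw [Matrix.toEuclideanLin_apply, Matrix.toEuclideanLin_apply,
        ← Matrix.mulVec_mulVec]
      rfl
    rw [this]
    exact LinearMap.mem_range_self _ _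
  have hVK : ∀ i, μ i ≠ 0 → (V i : EuclideanSpace ℝ (Fin n)) ∈ K := by
    intro i hi
    have h1 : Matrix.toEuclideanLin (A * Aᵀ) (V i) = μ i • V i := by
      ext j
      have := congrFun (hps.1.mulVec_eigenvectorBasis i) j
      simpa [Matrix.toEuclideanLin_apply] using this
    have : (V i : EuclideanSpace ℝ (Fin n)) = (μ i)⁻¹ • Matrix.toEuclideanLin (A * Aᵀ) (V i) := by
      rw [h1, smul_smul, inv_mul_cancel₀ hi, one_smul]
    rw [this]
    exact K.smul_mem _ (hcomp _)
  have hVKo : ∀ i, μ i = 0 → (V i : EuclideanSpace ℝ (Fin n)) ∈ Kᗮ := by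
    intro i hi
    have hAT : Aᵀ *ᵥ ⇑(V i) = 0 := by
      have h0 : (A * Aᵀ) *ᵥ ⇑(V i) = 0 := by
        rw [hps.1.mulVec_eigenvectorBasis i, ← hμdef, hi, zero_smul]
      have h2 : (Aᵀ *ᵥ ⇑(V i)) ⬝ᵥ (Aᵀ *ᵥ ⇑(V i)) = 0 := by
        nth_rewrite 1 [Matrix.mulVec_transpose]
        rw [← Matrix.dotProduct_mulVec, Matrix.mulVec_mulVec, h0, dotProduct_zero]
      exact dotProduct_self_eq_zero.mp h2
    rw [Submodule.mem_orthogonal]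
    rintro u ⟨x, rfl⟩
    have hadj : inner (𝕜 := ℝ) (Matrix.toEuclideanLin A x) (V i)
        = inner (𝕜 := ℝ) x (Matrix.toEuclideanLin Aᵀ (V i)) := by
      rw [← Matrix.conjTranspose_eq_transpose_of_trivial,
        Matrix.toEuclideanLin_conjTranspose_eq_adjoint]
      exact (LinearMap.adjoint_inner_right _ _ _).symm
    rw [hadj]
    have : Matrix.toEuclideanLin Aᵀ (V i) = 0 := by
      ext j
      have := congrFun hAT j
      simpa [Matrix.toEuclideanLin_apply] using this
    rw [this, inner_zero_right]
  have hinner : ∀ i, inner (𝕜 := ℝ) (V i) Pb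
      = if μ i = 0 then inner (𝕜 := ℝ) (V i) b else 0 := by
    intro i
    by_cases hi : μ i = 0
    · rw [if_pos hi, hPbdef, inner_sub_right]
      have : inner (𝕜 := ℝ) (V i) (K.subtype (K.orthogonalProjectionOnto b)) = 0 := by
        rw [real_inner_comm]
        exact Submodule.inner_right_of_mem_orthogonal (Submodule.coe_mem _) (hVKo i hi)
      rw [this, sub_zero]
    · rw [if_neg hi]
      exact Submodule.inner_right_of_mem_orthogonal (hVK i hi) hPb
  have hnorm : ‖Pb‖ ^ 2 = ∑ i, (inner (𝕜 := ℝ) (V i) Pb) ^ 2 := by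
    rw [← real_inner_self_eq_norm_sq, ← V.sum_inner_mul_inner Pb Pb]
    exact Finset.sum_congr rfl fun i _ => by rw [real_inner_comm Pb (V i), sq]
  rw [hnorm]
  refine Finset.sum_congr rfl fun i _ => ?_
  rw [hinner i]
  by_cases hi : μ i = 0 <;> simp [hi]

end Aux

open Filter

/-- Properties of the discrepancy function `φ(α) = α³ ⟨(A Aᵀ + αI)⁻³ b, b⟩`:
it is nondecreasing on `(0,∞)`, tends to `‖b‖₂²` as `α → ∞`, tends to
`‖(I − P_{R(A)}) b‖₂²` as `α → 0⁺` (with `P_{R(A)}` the orthogonal projector onto the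
range of `A`), and hence `φ(α) = τ²` has a positive solution whenever
`‖(I − P_{R(A)}) b‖₂ < τ < ‖b‖₂`. -/
theorem discrepancy_function_properties {n : ℕ}
    (A : Matrix (Fin n) (Fin n) ℝ) (b : EuclideanSpace ℝ (Fin n))
    (φ : ℝ → ℝ)
    (hφ : φ = fun α => α ^ 3 *
      inner (𝕜 := ℝ) (Matrix.toEuclideanLin ((A * Aᵀ + α • 1)⁻¹ ^ 3) b) b)
    (K : Submodule ℝ (EuclideanSpace ℝ (Fin n)))
    (hK : K = LinearMap.range (Matrix.toEuclideanLin A)) :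
    (∀ α β : ℝ, 0 < α → α ≤ β → φ α ≤ φ β) ∧
    Filter.Tendsto φ Filter.atTop (nhds (‖b‖ ^ 2)) ∧
    Filter.Tendsto φ (nhdsWithin 0 (Set.Ioi 0))
      (nhds (‖b - (K.subtype (K.orthogonalProjectionOnto b))‖ ^ 2)) ∧
    (∀ τ : ℝ, ‖b - (K.subtype (K.orthogonalProjectionOnto b))‖ < τ → τ < ‖b‖ →
      ∃ α : ℝ, 0 < α ∧ φ α = τ ^ 2) := by
  have hps : (A * Aᵀ).PosSemidef := by
    have := Matrix.posSemidef_self_mul_conjTranspose A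
    rwa [Matrix.conjTranspose_eq_transpose_of_trivial] at this
  set μ := hps.1.eigenvalues with hμdef
  set V := hps.1.eigenvectorBasis with hVdef
  set c : Fin n → ℝ := fun i => inner (𝕜 := ℝ) (V i) b with hcdef
  have hμ : ∀ i, 0 ≤ μ i := hps.eigenvalues_nonneg
  have hφeq : ∀ α : ℝ, 0 < α → φ α = ∑ i, (α / (μ i + α)) ^ 3 * c i ^ 2 := by
    intro α hα
    rw [hφ]
    exact phi_expand hps b hα
  -- monotonicity
  have hmono : ∀ α β : ℝ, 0 < α → α ≤ β → φ α ≤ φ β := by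
    intro α β hα hαβ
    rw [hφeq α hα, hφeq β (lt_of_lt_of_le hα hαβ)]
    refine Finset.sum_le_sum fun i _ => ?_
    have h1 : 0 < μ i + α := add_pos_of_nonneg_of_pos (hμ i) hα
    have h2 : 0 < μ i + β := by linarith
    have hr : α / (μ i + α) ≤ β / (μ i + β) := by
      rw [div_le_div_iff₀ h1 h2]; nlinarith [hμ i]
    have h0 : 0 ≤ α / (μ i + α) := div_nonneg hα.le h1.le
    exact mul_le_mul_of_nonneg_right (pow_le_pow_left₀ h0 hr 3) (sq_nonneg _)
  have hbnorm : ‖b‖ ^ 2 = ∑ i, c i ^ 2 := by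
    rw [← real_inner_self_eq_norm_sq, ← V.sum_inner_mul_inner b b]
    exact Finset.sum_congr rfl fun i _ => by
      simp only [hcdef, sq]
      rw [real_inner_comm (V i) b]
  -- limit at infinity
  have htop : Tendsto φ atTop (nhds (‖b‖ ^ 2)) := by
    rw [hbnorm]
    have hsum : Tendsto (fun α : ℝ => ∑ i, (α / (μ i + α)) ^ 3 * c i ^ 2) atTop
        (nhds (∑ i, c i ^ 2)) := by
      refine tendsto_finset_sum _ fun i _ => ?_
      have hrt : Tendsto (fun α : ℝ => α / (μ i + α)) atTop (nhds 1) := by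
        have hat : Tendsto (fun α : ℝ => μ i + α) atTop atTop :=
          tendsto_atTop_add_const_left _ _ tendsto_id
        have hz : Tendsto (fun α : ℝ => μ i / (μ i + α)) atTop (nhds 0) :=
          Tendsto.div_atTop tendsto_const_nhds hat
        have h1 : Tendsto (fun α : ℝ => 1 - μ i / (μ i + α)) atTop (nhds 1) := by
          simpa using tendsto_const_nhds.sub hz
        refine h1.congr' ?_
        filter_upwards [eventually_gt_atTop 0] with α hα
        have h2 : μ i + α > 0 := add_pos_of_nonneg_of_pos (hμ i) hα
        field_simp
        ring
      have := ((hrt.pow 3).mul_const (c i ^ 2))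
      simpa using this
    refine hsum.congr' ?_
    filter_upwards [eventually_gt_atTop 0] with α hα
    exact (hφeq α hα).symm
  -- limit at 0+
  have hL0 : ‖b - (K.subtype (K.orthogonalProjectionOnto b))‖ ^ 2
      = ∑ i, if μ i = 0 then c i ^ 2 else 0 := by
    rw [hK]; exact tail_norm hps b
  have h0lim : Tendsto φ (nhdsWithin 0 (Set.Ioi 0))
      (nhds (‖b - (K.subtype (K.orthogonalProjectionOnto b))‖ ^ 2)) := by
    rw [hL0]
    have hsum : Tendsto (fun α : ℝ => ∑ i, (α / (μ i + α)) ^ 3 * c i ^ 2)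
        (nhdsWithin 0 (Set.Ioi 0)) (nhds (∑ i, if μ i = 0 then c i ^ 2 else 0)) := by
      refine tendsto_finset_sum _ fun i _ => ?_
      by_cases hi : μ i = 0
      · rw [if_pos hi]
        refine Tendsto.congr' ?_ tendsto_const_nhds
        filter_upwards [self_mem_nhdsWithin] with α (hα : α ∈ Set.Ioi 0)
        rw [hi, zero_add, div_self (ne_of_gt hα), one_pow, one_mul]
      · rw [if_neg hi]
        have hμi : 0 < μ i := lt_of_le_of_ne (hμ i) (Ne.symm hi)
        have hc : ContinuousAt (fun α : ℝ => (α / (μ i + α)) ^ 3 * c i ^ 2) 0 := by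
          refine ContinuousAt.mul (ContinuousAt.pow ?_ 3) continuousAt_const
          exact ContinuousAt.div continuousAt_id (continuousAt_const.add continuousAt_id)
            (by simpa using hμi.ne')
        have := hc.tendsto.mono_left (nhdsWithin_le_nhds (s := Set.Ioi (0:ℝ)))
        simpa using this
    refine hsum.congr' ?_
    filter_upwards [self_mem_nhdsWithin] with α (hα : α ∈ Set.Ioi 0)
    exact (hφeq α hα).symm
  refine ⟨hmono, htop, h0lim, ?_⟩
  -- existence of solution
  intro τ h1 h2
  have hτ0 : 0 ≤ τ := le_trans (norm_nonneg _) h1.le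
  have hl : ‖b - (K.subtype (K.orthogonalProjectionOnto b))‖ ^ 2 < τ ^ 2 :=
    pow_lt_pow_left₀ h1 (norm_nonneg _) (by norm_num)
  have hu : τ ^ 2 < ‖b‖ ^ 2 := pow_lt_pow_left₀ h2 hτ0 (by norm_num)
  obtain ⟨a, ha1, ha2⟩ : ∃ a : ℝ, φ a < τ ^ 2 ∧ a ∈ Set.Ioi 0 :=
    ((h0lim.eventually_lt_const hl).and self_mem_nhdsWithin).exists
  obtain ⟨B, hB1, hB2⟩ : ∃ B : ℝ, τ ^ 2 < φ B ∧ a ≤ B :=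
    ((htop.eventually_const_lt hu).and (eventually_ge_atTop a)).exists
  have haB : ContinuousOn φ (Set.Icc a B) := by
    have hcont : ContinuousOn (fun α : ℝ => ∑ i, (α / (μ i + α)) ^ 3 * c i ^ 2)
        (Set.Icc a B) := by
      refine continuousOn_finset_sum _ fun i _ => ?_
      refine ContinuousOn.mul (ContinuousOn.pow ?_ 3) continuousOn_const
      refine ContinuousOn.div continuousOn_id (continuousOn_const.add continuousOn_id) ?_
      intro x hx
      have : 0 < x := lt_of_lt_of_le ha2 hx.1
      have := add_pos_of_nonneg_of_pos (hμ i) this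
      exact this.ne'
    exact hcont.congr fun x hx => hφeq x (lt_of_lt_of_le ha2 hx.1)
  have hiv := intermediate_value_Icc hB2 haB
  have hmem : τ ^ 2 ∈ Set.Icc (φ a) (φ B) := ⟨ha1.le, hB1.le⟩
  obtain ⟨α, hα1, hα2⟩ := hiv hmem
  exact ⟨α, lt_of_lt_of_le ha2 hα1.1, hα2⟩
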